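/- Decay of neighborhood measures: let E ⊆ X be (σ₀,γ₀)-weakly porous with respect to the Macías–Segovia quasi-distance δ with ρ_{δ,E} doubling. For any ball B⁰ = B_δ(x₀,r₀) meeting E and any 0 < ε < ρ_{δ,E}(B⁰), there exist constants p, q ∈ (0,1), independent of ε and of B⁰, such that μ(F(pε)) ≤ q·μ(F(ε)), where F(ε) = {x ∈ B⁰ : δ(x,E) < ε}. Consequently μ(F((p^k/2)ρ_{δ,E}(B⁰))) ≤ q^k μ(B⁰) for every k ≥ 0. -/

import Mathlib

open MeasureTheory ENNReal Set

namespace WPA1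

variable {X : Type*}

/-- `d` is a quasi-distance on `X` with triangular constant `K`. -/
def QD (d : X → X → ℝ) (K : ℝ) : Prop :=
  1 ≤ K ∧ (∀ x y, 0 ≤ d x y) ∧ (∀ x y, d x y = 0 ↔ x = y) ∧
    (∀ x y, d x y = d y x) ∧ ∀ x y z, d x z ≤ K * (d x y + d y z)

/-- The `d`-ball of center `x` and radius `r`. -/
def ball (d : X → X → ℝ) (x : X) (r : ℝ) : Set X := {y | d x y < r}

/-- The optimal (least) triangular constant of `d`. -/
noncomputable def Kopt (d : X → X → ℝ) : ℝ := sInf {K | QD d K}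

/-- Distance from a point to a set: `d(x,E) = inf_{e ∈ E} d(x,e)`. -/
noncomputable def distE (d : X → X → ℝ) (E : Set X) (x : X) : ℝ :=
  sInf ((d x) '' E)

/-- The maximal `E`-free hole function
`ρ_{d,E}(B_d(x,r)) = sup {0 < s ≤ 2Kr : ∃ y, B_d(y,s) ⊆ B_d(x,r) \ E}`
(with value `0` when the set is empty, by `Real.sSup` conventions). -/
noncomputable def hole (d : X → X → ℝ) (K : ℝ) (E : Set X) (x : X) (r : ℝ) : ℝ :=
  sSup {s | 0 < s ∧ s ≤ 2 * K * r ∧ ∃ y, ball d y s ⊆ ball d x r \ E}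

/-- The maximal hole function `ρ_{d,E}` is doubling with constant `C`. -/
def HoleDoubling (d : X → X → ℝ) (K : ℝ) (E : Set X) (C : ℝ) : Prop :=
  ∀ x r, 0 < r → hole d K E x (2 * r) ≤ C * hole d K E x r

/-- The `d`-balls are open and form neighborhood bases: the ambient topology is
the one induced by the quasi-distance `d`. -/
def BallsBasis [TopologicalSpace X] (d : X → X → ℝ) : Prop :=
  (∀ x r, IsOpen (ball d x r)) ∧ ∀ x, ∀ U ∈ nhds x, ∃ r > 0, ball d x r ⊆ U

/-- The measure `μ` is doubling (with constant `A`) on `d`-balls, which have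
positive finite measure; i.e. `(X,d,μ)` is a space of homogeneous type. -/
def DoublingBalls [MeasurableSpace X] (μ : Measure X) (d : X → X → ℝ) (A : ℝ) : Prop :=
  ∀ x r, 0 < r → 0 < μ (ball d x r) ∧ μ (ball d x r) < ⊤ ∧
    μ (ball d x (2 * r)) ≤ ENNReal.ofReal A * μ (ball d x r)

/-- `E` is `(σ,γ)`-weakly porous with respect to `d` and `μ`. -/
def WeaklyPorousWith [MeasurableSpace X] (μ : Measure X) (d : X → X → ℝ) (K : ℝ)
    (E : Set X) (σ γ : ℝ) : Prop :=
  ∀ x r, 0 < r → ∃ (n : ℕ) (c : Fin n → X) (ρ : Fin n → ℝ),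
    (∀ i j, i ≠ j → Disjoint (ball d (c i) (ρ i)) (ball d (c j) (ρ j))) ∧
    (∀ i, ball d (c i) (ρ i) ⊆ ball d x r \ E) ∧
    (∀ i, γ * hole d K E x r ≤ ρ i) ∧
    (∀ i, ρ i ≤ 2 * K * r) ∧
    ENNReal.ofReal σ * μ (ball d x r) ≤ ∑ i, μ (ball d (c i) (ρ i))

/-- `E` is weakly porous with respect to `d` and `μ`. -/
def WeaklyPorous [MeasurableSpace X] (μ : Measure X) (d : X → X → ℝ) (K : ℝ)
    (E : Set X) : Prop :=
  ∃ σ γ : ℝ, σ ∈ Set.Ioo (0:ℝ) 1 ∧ γ ∈ Set.Ioo (0:ℝ) 1 ∧ WeaklyPorousWith μ d K E σ γ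

/-- The weight `d(·,E)^{-α}`, valued in `ℝ≥0∞` (so it is `∞` on `{d(·,E)=0}`). -/
noncomputable def wgt (d : X → X → ℝ) (E : Set X) (α : ℝ) (x : X) : ℝ≥0∞ :=
  ENNReal.ofReal (distE d E x) ^ (-α)

/-- `w` is an `A₁(X,d,μ)`-weight: `w` is locally integrable and the mean value of `w`
over every `d`-ball is bounded by a constant times its essential infimum there. -/
def MemA1 [MeasurableSpace X] (μ : Measure X) (d : X → X → ℝ) (w : X → ℝ≥0∞) : Prop :=
  (∀ x r, 0 < r → ∫⁻ y in ball d x r, w y ∂μ < ⊤) ∧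
  ∃ C : ℝ, 0 < C ∧ ∀ x r, 0 < r →
    ∫⁻ y in ball d x r, w y ∂μ ≤
      ENNReal.ofReal C * essInf w (μ.restrict (ball d x r)) * μ (ball d x r)

/-!
Fix `ε` below the hole `ρ(B⁰)` and a point `x ∈ B⁰` with `δ(x,E) < p₁ε`. Halving radii, the
doubling of `ρ` yields a radius `r` with `ε < ρ(B(x,r)) ≤ Cε`. An interior ball of `B(x,r) ∩ B⁰`
still has a hole comparable to `ε`, so weak porosity places inside it disjoint `E`-free balls of
radius `≳ ε` carrying a fixed fraction of the measure of `B(x,3Kr)`. Shrunk by the factor `2K`, they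
form a set `G_x` on which `p₁ε ≤ δ(·,E) < Nε`: the lower bound because the balls miss `E`, the upper
bound because a hole of size `≤ Cε` forces `E` to come within `O(ε)` of every point of `B(x,r)`.
A Vitali subfamily of the balls `B(x,r)` then gives `μ(F(p₁ε)) ≲ μ(F(Nε) \ F(p₁ε))`, that is
`μ(F(p₁ε)) ≤ q μ(F(Nε))` with `q < 1`, and iterating gives the geometric decay.
-/

theorem ball_subset_ball {d : X → X → ℝ} {x : X} {r r' : ℝ} (h : r ≤ r') :
    ball d x r ⊆ ball d x r' :=
  fun _ hy => lt_of_lt_of_le hy h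

theorem exists_le_two_pow_mul (a : ℝ) {b : ℝ} (hb : 0 < b) : ∃ k : ℕ, a ≤ 2 ^ k * b := by
  obtain ⟨k, hk⟩ := pow_unbounded_of_one_lt (a / b) one_lt_two
  exact ⟨k, ((div_lt_iff₀ hb).1 hk).le⟩

namespace QD

variable {d : X → X → ℝ} {K : ℝ}

theorem nonneg (hd : QD d K) (x y : X) : 0 ≤ d x y := hd.2.1 x y

theorem self_eq_zero (hd : QD d K) (x : X) : d x x = 0 := (hd.2.2.1 x x).2 rfl

theorem symm (hd : QD d K) (x y : X) : d x y = d y x := hd.2.2.2.1 x y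

theorem le_mul_add (hd : QD d K) (x y z : X) : d x z ≤ K * (d x y + d y z) :=
  hd.2.2.2.2 x y z

theorem pos (hd : QD d K) : 0 < K := one_pos.trans_le hd.1

theorem mem_ball_self (hd : QD d K) (x : X) {r : ℝ} (hr : 0 < r) : x ∈ ball d x r := by
  change d x x < r
  rwa [hd.self_eq_zero]

theorem mem_ball_comm (hd : QD d K) {x y : X} {r : ℝ} : y ∈ ball d x r ↔ x ∈ ball d y r := by
  change d x y < r ↔ d y x < r
  rw [hd.symm]

theorem pos_of_mem_ball (hd : QD d K) {x y : X} {r : ℝ} (h : y ∈ ball d x r) : 0 < r :=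
  (hd.nonneg x y).trans_lt h

theorem ball_eq_empty (hd : QD d K) (x : X) {r : ℝ} (hr : r ≤ 0) : ball d x r = ∅ :=
  Set.eq_empty_of_forall_notMem fun _ hy => hr.not_gt (hd.pos_of_mem_ball hy)

theorem ball_subset_ball_of_mem (hd : QD d K) {x y : X} {r s t : ℝ} (hy : y ∈ ball d x r)
    (h : K * (r + s) ≤ t) : ball d y s ⊆ ball d x t := fun w (hw : d y w < s) =>
  calc d x w ≤ K * (d x y + d y w) := hd.le_mul_add x y w
    _ < K * (r + s) := mul_lt_mul_of_pos_left (add_lt_add hy hw) hd.pos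
    _ ≤ t := h

theorem ball_div_subset (hd : QD d K) (x : X) (r : ℝ) :
    ball d x (r / (2 * K)) ⊆ ball d x r := by
  intro y hy
  have h2K : 1 ≤ 2 * K := by linarith [hd.1]
  have hr : 0 < r := (div_pos_iff_of_pos_right (by linarith)).1 (hd.pos_of_mem_ball hy)
  exact ball_subset_ball (div_le_self hr.le h2K) hy

end QD

section distE

variable {d : X → X → ℝ} {K : ℝ} {E : Set X}

theorem distE_nonneg (hd : QD d K) (E : Set X) (x : X) : 0 ≤ distE d E x :=
  Real.sInf_nonneg (by rintro _ ⟨e, -, rfl⟩; exact hd.nonneg x e)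

theorem distE_le (hd : QD d K) {e : X} (he : e ∈ E) (x : X) : distE d E x ≤ d x e :=
  csInf_le ⟨0, by rintro _ ⟨e', -, rfl⟩; exact hd.nonneg x e'⟩ (Set.mem_image_of_mem _ he)

theorem exists_lt_of_distE_lt (hE : E.Nonempty) {x : X} {t : ℝ} (h : distE d E x < t) :
    ∃ e ∈ E, d x e < t := by
  obtain ⟨_, ⟨e, he, rfl⟩, hlt⟩ := exists_lt_of_csInf_lt (hE.image (d x)) h
  exact ⟨e, he, hlt⟩

theorem le_distE (hE : E.Nonempty) {x : X} {t : ℝ} (h : ∀ e ∈ E, t ≤ d x e) :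
    t ≤ distE d E x :=
  le_csInf (hE.image _) (by rintro _ ⟨e, he, rfl⟩; exact h e he)

theorem isOpen_setOf_distE_lt [TopologicalSpace X] (hd : QD d K)
    (hopen : ∀ x r, IsOpen (ball d x r)) (hE : E.Nonempty) (t : ℝ) :
    IsOpen {x | distE d E x < t} := by
  have : {x | distE d E x < t} = ⋃ e ∈ E, ball d e t := by
    ext x
    rw [Set.mem_iUnion₂]
    constructor
    · intro h
      obtain ⟨e, he, hxe⟩ := exists_lt_of_distE_lt hE h
      exact ⟨e, he, hd.mem_ball_comm.1 hxe⟩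
    · rintro ⟨e, he, hex⟩
      exact (distE_le hd he x).trans_lt (hd.mem_ball_comm.1 hex)
  rw [this]
  exact isOpen_biUnion fun e _ => hopen e t

theorem distE_lt_mul_add (hd : QD d K) (hE : E.Nonempty) {x : X} {ε : ℝ}
    (hx : distE d E x < ε) (u : X) : distE d E u < K * (d u x + ε) := by
  obtain ⟨e, he, hxe⟩ := exists_lt_of_distE_lt hE hx
  calc distE d E u ≤ d u e := distE_le hd he u
    _ ≤ K * (d u x + d x e) := hd.le_mul_add u x e
    _ < K * (d u x + ε) := mul_lt_mul_of_pos_left (by linarith) hd.pos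

theorem div_le_distE (hd : QD d K) (hE : E.Nonempty) {c u : X} {ρ : ℝ}
    (hc : Disjoint (ball d c ρ) E) (hu : u ∈ ball d c (ρ / (2 * K))) :
    ρ / (2 * K) ≤ distE d E u := by
  refine le_distE hE fun e he => ?_
  have hK := hd.pos
  have hce : ρ ≤ d c e := not_lt.1 fun h => Set.disjoint_left.1 hc h he
  have hcu : K * d c u < ρ / 2 :=
    calc K * d c u < K * (ρ / (2 * K)) := mul_lt_mul_of_pos_left hu hK
      _ = ρ / 2 := by field_simp
  have := hd.le_mul_add c u e
  rw [div_le_iff₀ (by positivity)]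
  linarith

end distE

section Hole

variable {d : X → X → ℝ} {K C : ℝ} {E : Set X} {x : X}

theorem hole_nonneg (d : X → X → ℝ) (K : ℝ) (E : Set X) (x : X) (r : ℝ) :
    0 ≤ hole d K E x r :=
  Real.sSup_nonneg fun _ hs => hs.1.le

theorem le_hole {r s : ℝ} (hs : 0 < s) (hsr : s ≤ 2 * K * r) {y : X}
    (hy : ball d y s ⊆ ball d x r \ E) : s ≤ hole d K E x r :=
  le_csSup ⟨2 * K * r, fun _ h => h.2.1⟩ ⟨hs, hsr, y, hy⟩

theorem hole_le {r : ℝ} (hr : 0 ≤ 2 * K * r) : hole d K E x r ≤ 2 * K * r :=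
  Real.sSup_le (fun _ hs => hs.2.1) hr

theorem hole_mono (hK : 0 ≤ K) {x' : X} {r r' : ℝ} (hr : r ≤ r')
    (hb : ball d x r ⊆ ball d x' r') : hole d K E x r ≤ hole d K E x' r' :=
  Real.sSup_le (fun _ ⟨hs, hsr, y, hy⟩ => le_hole hs (hsr.trans (by gcongr))
    (hy.trans (Set.sdiff_subset_sdiff_left hb))) (hole_nonneg d K E x' r')

theorem HoleDoubling.mono (h : HoleDoubling d K E C) {C' : ℝ} (hC : C ≤ C') :
    HoleDoubling d K E C' :=
  fun x r hr => (h x r hr).trans (mul_le_mul_of_nonneg_right hC (hole_nonneg d K E x r))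

theorem HoleDoubling.hole_two_pow_mul_le (h : HoleDoubling d K E C) (hC : 0 ≤ C) (x : X)
    {s : ℝ} (hs : 0 < s) (k : ℕ) : hole d K E x (2 ^ k * s) ≤ C ^ k * hole d K E x s := by
  induction k with
  | zero => simp
  | succ k ih =>
    calc hole d K E x (2 ^ (k + 1) * s) = hole d K E x (2 * (2 ^ k * s)) := by ring_nf
      _ ≤ C * hole d K E x (2 ^ k * s) := h x _ (by positivity)
      _ ≤ C * (C ^ k * hole d K E x s) := by gcongr
      _ = C ^ (k + 1) * hole d K E x s := by ring

theorem HoleDoubling.hole_le_pow_mul (h : HoleDoubling d K E C) (hC : 0 ≤ C) (hK : 0 ≤ K)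
    {r s : ℝ} (hs : 0 < s) {k : ℕ} (hrs : r ≤ 2 ^ k * s) :
    hole d K E x r ≤ C ^ k * hole d K E x s :=
  (hole_mono hK hrs (ball_subset_ball hrs)).trans (h.hole_two_pow_mul_le hC x hs k)

theorem HoleDoubling.exists_radius (h : HoleDoubling d K E C) (hC : 0 ≤ C) (hK : 0 ≤ K)
    {ε R : ℝ} (hε : 0 < ε) (hR : 0 < R) (hεR : ε < hole d K E x R) :
    ∃ r, 0 < r ∧ r ≤ R ∧ ε < hole d K E x r ∧ hole d K E x r ≤ C * ε := by
  have halving : ∀ n : ℕ, ∀ R, 0 < R → ε < hole d K E x R → hole d K E x (R / 2 ^ n) ≤ ε →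
      ∃ r, 0 < r ∧ r ≤ R ∧ ε < hole d K E x r ∧ hole d K E x r ≤ C * ε := by
    intro n
    induction n with
    | zero =>
      intro R _ hεR hn
      rw [pow_zero, div_one] at hn
      exact absurd hεR hn.not_gt
    | succ n ih =>
      intro R hR hεR hn
      by_cases hhalf : hole d K E x (R / 2) ≤ ε
      · refine ⟨R, hR, le_rfl, hεR, ?_⟩
        calc hole d K E x R = hole d K E x (2 * (R / 2)) := by rw [mul_div_cancel₀ _ two_ne_zero]
          _ ≤ C * hole d K E x (R / 2) := h x _ (by positivity)
          _ ≤ C * ε := by gcongr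
      · obtain ⟨r, hr, hrR, hεr, hrC⟩ :=
          ih (R / 2) (by positivity) (not_le.1 hhalf) (by rwa [div_div, ← pow_succ'])
        exact ⟨r, hr, hrR.trans (by linarith), hεr, hrC⟩
  obtain ⟨n, hn⟩ := pow_unbounded_of_one_lt (2 * K * R / ε) one_lt_two
  refine halving n R hR hεR ((hole_le (by positivity)).trans ?_)
  rw [div_lt_iff₀ hε] at hn
  rw [← mul_div_assoc, div_le_iff₀ (by positivity)]
  linarith

end Hole

def HasInteriorBalls (d : X → X → ℝ) (K β : ℝ) : Prop :=
  ∀ x r t y, 0 < r → 0 < t → t ≤ 2 * K * r → y ∈ ball d x r →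
    ∃ z, ball d z (β * t) ⊆ ball d y t ∩ ball d x r

section InteriorBalls

variable {d : X → X → ℝ} {K β : ℝ} {E : Set X}

theorem HasInteriorBalls.exists_mem_lt_of_hole_lt (hint : HasInteriorBalls d K β)
    (hd : QD d K) (hβ0 : 0 < β) (hβ1 : β ≤ 1) {x u : X} {r t : ℝ} (hu : u ∈ ball d x r)
    (ht : 0 < t) (htr : t ≤ 2 * K * r) (hhole : hole d K E x r < β * t) :
    ∃ e ∈ E, d u e < t := by
  obtain ⟨z, hz⟩ := hint x r t u (hd.pos_of_mem_ball hu) ht htr hu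
  by_contra! hfar
  refine hhole.not_ge (le_hole (by positivity) ((mul_le_of_le_one_left ht.le hβ1).trans htr)
    (y := z) fun w hw => ⟨(hz hw).2, fun hwE => (hfar w hwE).not_gt (hz hw).1⟩)

theorem HasInteriorBalls.distE_lt (hint : HasInteriorBalls d K β) (hd : QD d K)
    (hβ0 : 0 < β) (hβ1 : β ≤ 1) (hE : E.Nonempty) {x u : X} {r t ε : ℝ}
    (hu : u ∈ ball d x r) (hx : distE d E x < ε) (ht : 0 < t) (hhole : hole d K E x r < β * t) :
    distE d E u < t + K * ε := by
  have hK := hd.pos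
  have hKε : 0 ≤ K * ε := mul_nonneg hK.le ((distE_nonneg hd E x).trans hx.le)
  -- Either an interior ball of radius `β * t` is too large to miss `E`, or `t > 2 * K * r` and
  -- `E` is reached through `x`.
  rcases le_or_gt t (2 * K * r) with htr | htr
  · obtain ⟨e, he, hue⟩ := hint.exists_mem_lt_of_hole_lt hd hβ0 hβ1 hu ht htr hhole
    linarith [distE_le hd he u]
  · have hux : K * d u x ≤ K * r :=
      mul_le_mul_of_nonneg_left (by rw [hd.symm]; exact (hu : d x u < r).le) hK.le
    linarith [distE_lt_mul_add hd hE hx u]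

end InteriorBalls

section Measure

variable [MeasurableSpace X] {μ : Measure X} {d : X → X → ℝ} {K A : ℝ}

theorem DoublingBalls.measure_ball_two_pow_mul_le (hμ : DoublingBalls μ d A) (x : X) {s : ℝ}
    (hs : 0 < s) (k : ℕ) :
    μ (ball d x (2 ^ k * s)) ≤ ENNReal.ofReal A ^ k * μ (ball d x s) := by
  induction k with
  | zero => simp
  | succ k ih =>
    calc μ (ball d x (2 ^ (k + 1) * s)) = μ (ball d x (2 * (2 ^ k * s))) := by ring_nf
      _ ≤ ENNReal.ofReal A * μ (ball d x (2 ^ k * s)) := (hμ x _ (by positivity)).2.2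
      _ ≤ ENNReal.ofReal A * (ENNReal.ofReal A ^ k * μ (ball d x s)) := by gcongr
      _ = ENNReal.ofReal A ^ (k + 1) * μ (ball d x s) := by ring

theorem DoublingBalls.measure_ball_le_pow_mul (hμ : DoublingBalls μ d A) (x : X) {r s : ℝ}
    (hs : 0 < s) {k : ℕ} (hrs : r ≤ 2 ^ k * s) :
    μ (ball d x r) ≤ ENNReal.ofReal A ^ k * μ (ball d x s) :=
  (measure_mono (ball_subset_ball hrs)).trans (hμ.measure_ball_two_pow_mul_le x hs k)

theorem DoublingBalls.of_le_of_le_mul {δ : X → X → ℝ} (hμ : DoublingBalls μ d A)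
    (hle : ∀ x y, δ x y ≤ d x y) {M : ℝ} (hM : 0 < M) (hge : ∀ x y, d x y ≤ M * δ x y) :
    ∃ A', 1 ≤ A' ∧ DoublingBalls μ δ A' := by
  have hsub : ∀ x r, ball d x r ⊆ ball δ x r := fun x _ y hy => (hle x y).trans_lt hy
  have hsup : ∀ x r, ball δ x r ⊆ ball d x (M * r) := fun x _ y hy =>
    (hge x y).trans_lt (mul_lt_mul_of_pos_left hy hM)
  obtain ⟨m, hm⟩ := pow_unbounded_of_one_lt (2 * M) one_lt_two
  refine ⟨max A 1 ^ m, one_le_pow₀ (le_max_right _ _), fun x r hr =>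
    ⟨(hμ x r hr).1.trans_le (measure_mono (hsub x r)),
      (measure_mono (hsup x r)).trans_lt (hμ x _ (by positivity)).2.1, ?_⟩⟩
  calc μ (ball δ x (2 * r)) ≤ μ (ball d x (M * (2 * r))) := measure_mono (hsup _ _)
    _ ≤ ENNReal.ofReal A ^ m * μ (ball d x r) :=
      hμ.measure_ball_le_pow_mul x hr (by nlinarith)
    _ ≤ ENNReal.ofReal (max A 1 ^ m) * μ (ball δ x r) := by
      rw [ENNReal.ofReal_pow (by positivity)]
      gcongr
      exacts [le_max_left _ _, hsub x r]

theorem _root_.Set.PairwiseDisjoint.countable_of_measure_pos {ι : Type*} {u : Set ι}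
    {B : ι → Set X} (hu : u.PairwiseDisjoint B) (hm : ∀ i ∈ u, MeasurableSet (B i))
    (hpos : ∀ i ∈ u, 0 < μ (B i)) (hfin : μ (⋃ i ∈ u, B i) ≠ ∞) : u.Countable := by
  have := Measure.countable_meas_pos_of_disjoint_of_meas_iUnion_ne_top μ
    (As := fun i : u => B i) (fun i => hm i i.2)
    (fun i j hij => hu i.2 j.2 (Subtype.coe_injective.ne hij))
    (by rwa [Set.iUnion_subtype])
  exact Set.countable_coe_iff.1 <| Set.countable_univ_iff.1 <|
    this.mono fun i _ => hpos i i.2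

theorem mul_measure_le_of_forall_mul_measure_ball_le (hd : QD d K) (hμ : DoublingBalls μ d A)
    (hmeas : ∀ x r, MeasurableSet (ball d x r)) {S F : Set X} {x₀ : X} {r₀ M : ℝ}
    (hS : S ⊆ ball d x₀ r₀) {R : X → ℝ} (hR : ∀ x ∈ S, 0 < R x ∧ R x ≤ M) {G : X → Set X}
    (hGm : ∀ x ∈ S, MeasurableSet (G x)) (hGR : ∀ x ∈ S, G x ⊆ ball d x (R x))
    (hGF : ∀ x ∈ S, G x ⊆ F) {c D : ℝ≥0∞}
    (hG : ∀ x ∈ S, c * μ (ball d x (3 * K * R x)) ≤ D * μ (G x)) : c * μ S ≤ D * μ F := by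
  rcases S.eq_empty_or_nonempty with rfl | ⟨x, hx⟩
  · simp
  have hK := hd.pos
  have hr₀ : 0 < r₀ := hd.pos_of_mem_ball (hS hx)
  have hM : 0 < M := (hR x hx).1.trans_le (hR x hx).2
  obtain ⟨u, huS, hu, hcov⟩ := Vitali.exists_disjoint_subfamily_covering_enlargement
    (fun x => ball d x (R x)) S R 2 one_lt_two (fun x hx => (hR x hx).1.le) M
    (fun x hx => (hR x hx).2) (fun x hx => ⟨x, hd.mem_ball_self x (hR x hx).1⟩)
  have hcount : u.Countable := by
    refine hu.countable_of_measure_pos (fun b _ => hmeas _ _)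
      (fun b hb => (hμ b _ (hR b (huS hb)).1).1) (ne_of_lt ?_)
    refine (measure_mono (Set.iUnion₂_subset fun b hb => ?_)).trans_lt
      (hμ x₀ (K * (r₀ + M)) (by positivity)).2.1
    exact hd.ball_subset_ball_of_mem (hS (huS hb)) (by gcongr; exact (hR b (huS hb)).2)
  have hcover : S ⊆ ⋃ b ∈ u, ball d b (3 * K * R b) := by
    intro a ha
    obtain ⟨b, hb, ⟨w, hwa, hwb⟩, hab⟩ := hcov a ha
    exact Set.mem_biUnion hb (hd.ball_subset_ball_of_mem hwb (s := 2 * R b) (by linarith)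
      (ball_subset_ball hab (hd.mem_ball_comm.1 hwa)))
  calc c * μ S ≤ c * ∑' b : u, μ (ball d b (3 * K * R b)) := by
        gcongr
        exact (measure_mono hcover).trans (measure_biUnion_le μ hcount _)
    _ = ∑' b : u, c * μ (ball d b (3 * K * R b)) := ENNReal.tsum_mul_left.symm
    _ ≤ ∑' b : u, D * μ (G b) := ENNReal.tsum_le_tsum fun b => hG b (huS b.2)
    _ = D * μ (⋃ b ∈ u, G b) := by
        rw [ENNReal.tsum_mul_left, measure_biUnion hcount
          (hu.mono_on fun b hb => hGR b (huS hb)) fun b hb => hGm b (huS hb)]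
    _ ≤ D * μ F := by
        gcongr
        exact Set.iUnion₂_subset fun b hb => hGF b (huS hb)

end Measure

section Decay

variable [MeasurableSpace X] {μ : Measure X} {d : X → X → ℝ} {K A C β σ γ : ℝ} {E : Set X}

theorem WeaklyPorousWith.exists_subset_ball (hwp : WeaklyPorousWith μ d K E σ γ)
    (hd : QD d K) (hμ : DoublingBalls μ d A) (hmeas : ∀ x r, MeasurableSet (ball d x r))
    (hE : E.Nonempty) {k : ℕ} (hk : 2 * K ≤ 2 ^ k) (z : X) {s : ℝ} (hs : 0 < s) :
    ∃ G, MeasurableSet G ∧ G ⊆ ball d z s ∧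
      (∀ u ∈ G, γ * hole d K E z s / (2 * K) ≤ distE d E u) ∧
      ENNReal.ofReal σ * μ (ball d z s) ≤ ENNReal.ofReal A ^ k * μ G := by
  obtain ⟨n, c, ρ, hdisj, hsub, hρ, -, hmass⟩ := hwp z s hs
  have hK := hd.pos
  have hsmall : ∀ i, ball d (c i) (ρ i / (2 * K)) ⊆ ball d (c i) (ρ i) :=
    fun i => hd.ball_div_subset _ _
  refine ⟨⋃ i, ball d (c i) (ρ i / (2 * K)), MeasurableSet.iUnion fun i => hmeas _ _,
    Set.iUnion_subset fun i => (hsmall i).trans ((hsub i).trans Set.sdiff_subset), ?_, ?_⟩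
  · intro u hu
    obtain ⟨i, hi⟩ := Set.mem_iUnion.1 hu
    calc γ * hole d K E z s / (2 * K) ≤ ρ i / (2 * K) := by gcongr; exact hρ i
      _ ≤ distE d E u :=
        div_le_distE hd hE (Set.disjoint_of_subset_left (hsub i) Set.disjoint_sdiff_left) hi
  have hdouble : ∀ i, μ (ball d (c i) (ρ i)) ≤
      ENNReal.ofReal A ^ k * μ (ball d (c i) (ρ i / (2 * K))) := by
    intro i
    rcases le_or_gt (ρ i) 0 with hρ0 | hρ0
    · simp [hd.ball_eq_empty _ hρ0]
    refine hμ.measure_ball_le_pow_mul _ (by positivity) ?_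
    calc ρ i = 2 * K * (ρ i / (2 * K)) := by field_simp
      _ ≤ 2 ^ k * (ρ i / (2 * K)) := by gcongr
  calc ENNReal.ofReal σ * μ (ball d z s) ≤ ∑ i, μ (ball d (c i) (ρ i)) := hmass
    _ ≤ ∑ i, ENNReal.ofReal A ^ k * μ (ball d (c i) (ρ i / (2 * K))) :=
      Finset.sum_le_sum fun i _ => hdouble i
    _ = ENNReal.ofReal A ^ k * μ (⋃ i, ball d (c i) (ρ i / (2 * K))) := by
      rw [← Finset.mul_sum, measure_iUnion (fun i j hij => (hdisj i j hij).mono (hsmall i)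
        (hsmall j)) (fun i => hmeas _ _), tsum_fintype]

theorem exists_subset_ball_distE_mem_Ico (hd : QD d K) (hμ : DoublingBalls μ d A)
    (hmeas : ∀ x r, MeasurableSet (ball d x r)) (hβ : β ∈ Set.Ioo 0 1)
    (hint : HasInteriorBalls d K β) (hE : E.Nonempty) (hwp : WeaklyPorousWith μ d K E σ γ)
    (hγ : 0 ≤ γ) (hdbl : HoleDoubling d K E C) (hC : 1 ≤ C) {k₁ k₂ k₃ : ℕ}
    (hk₁ : 2 * K ≤ 2 ^ k₁ * β) (hk₂ : K * (1 + 3 * K) ≤ 2 ^ k₂ * β) (hk₃ : 2 * K ≤ 2 ^ k₃)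
    {x₀ x : X} {r₀ ε : ℝ} (hx : x ∈ ball d x₀ r₀) (hεx : ε < hole d K E x (2 * K * r₀))
    (hxE : distE d E x < ε) :
    ∃ r G, (0 < r ∧ r ≤ 2 * K * r₀) ∧ MeasurableSet G ∧ G ⊆ ball d x r ∧
      G ⊆ {u ∈ ball d x₀ r₀ | γ / (2 * K * C ^ k₁) * ε ≤ distE d E u ∧
        distE d E u < (2 * C / β + K) * ε} ∧
      ENNReal.ofReal σ * μ (ball d x (3 * K * r)) ≤ ENNReal.ofReal A ^ (k₂ + k₃) * μ G := by
  obtain ⟨hβ0, hβ1⟩ := hβ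
  have hK := hd.pos
  have hε : 0 < ε := (distE_nonneg hd E x).trans_lt hxE
  have hr₀ : 0 < r₀ := hd.pos_of_mem_ball hx
  obtain ⟨r, hr, hrr₀, hεr, hrC⟩ :=
    hdbl.exists_radius (by linarith) hK.le hε (by positivity) hεx
  obtain ⟨z, hz⟩ := hint x₀ r₀ r x hr₀ hr hrr₀ hx
  have hβr : 0 < β * r := by positivity
  have hxz : x ∈ ball d z r :=
    hd.mem_ball_comm.1 ((hz.trans Set.inter_subset_left) (hd.mem_ball_self z hβr))
  have hzhole : ε < C ^ k₁ * hole d K E z (β * r) :=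
    calc ε < hole d K E x r := hεr
      _ ≤ hole d K E z (2 * K * r) :=
        hole_mono hK.le (by nlinarith [hd.1]) (hd.ball_subset_ball_of_mem hxz (by linarith))
      _ ≤ C ^ k₁ * hole d K E z (β * r) :=
        hdbl.hole_le_pow_mul (by linarith) hK.le hβr (by nlinarith)
  obtain ⟨G, hGm, hGz, hGE, hGμ⟩ := hwp.exists_subset_ball hd hμ hmeas hE hk₃ z hβr
  have hGx : G ⊆ ball d x r ∩ ball d x₀ r₀ := hGz.trans hz
  refine ⟨r, G, ⟨hr, hrr₀⟩, hGm, hGx.trans Set.inter_subset_left,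
    fun u hu => ⟨(hGx hu).2, ?_, ?_⟩, ?_⟩
  · refine le_trans ?_ (hGE u hu)
    rw [div_mul_eq_mul_div, div_le_div_iff₀ (by positivity) (by positivity)]
    have := mul_le_mul_of_nonneg_left hzhole.le hγ
    nlinarith
  · have hlt := hint.distE_lt hd hβ0 hβ1.le hE (hGx hu).1 hxE (t := 2 * C * ε / β)
      (by positivity) (by rw [mul_div_cancel₀ _ hβ0.ne']; nlinarith)
    calc distE d E u < 2 * C * ε / β + K * ε := hlt
      _ = (2 * C / β + K) * ε := by ring
  · calc ENNReal.ofReal σ * μ (ball d x (3 * K * r))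
        ≤ ENNReal.ofReal σ * (ENNReal.ofReal A ^ k₂ * μ (ball d z (β * r))) := by
          gcongr
          refine (measure_mono (hd.ball_subset_ball_of_mem hxz le_rfl)).trans
            (hμ.measure_ball_le_pow_mul z hβr (by nlinarith))
      _ = ENNReal.ofReal A ^ k₂ * (ENNReal.ofReal σ * μ (ball d z (β * r))) := by ring
      _ ≤ ENNReal.ofReal A ^ k₂ * (ENNReal.ofReal A ^ k₃ * μ G) := by gcongr
      _ = ENNReal.ofReal A ^ (k₂ + k₃) * μ G := by ring

theorem le_ofReal_div_add_mul {σ D : ℝ} (hσ : 0 < σ) (hD : 0 ≤ D) {a b c : ℝ≥0∞}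
    (habc : a + c ≤ b) (h : ENNReal.ofReal σ * a ≤ ENNReal.ofReal D * c) :
    a ≤ ENNReal.ofReal (D / (σ + D)) * b := by
  have hσD : 0 < σ + D := by linarith
  have hsum : ENNReal.ofReal (σ + D) * a ≤ ENNReal.ofReal D * b :=
    calc ENNReal.ofReal (σ + D) * a = ENNReal.ofReal σ * a + ENNReal.ofReal D * a := by
          rw [ENNReal.ofReal_add hσ.le hD, add_mul]
      _ ≤ ENNReal.ofReal D * c + ENNReal.ofReal D * a := by gcongr
      _ = ENNReal.ofReal D * (a + c) := by ring
      _ ≤ ENNReal.ofReal D * b := by gcongr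
  rw [ENNReal.mul_le_iff_le_inv (by simpa using hσD) ENNReal.ofReal_ne_top] at hsum
  rwa [ENNReal.ofReal_div_of_pos hσD, div_eq_mul_inv, mul_comm (ENNReal.ofReal D), mul_assoc]

theorem measure_setOf_distE_lt_le [TopologicalSpace X] [BorelSpace X] (hd : QD d K)
    (hμ : DoublingBalls μ d A) (hA : 0 ≤ A) (hopen : ∀ x r, IsOpen (ball d x r))
    (hβ : β ∈ Set.Ioo 0 1) (hint : HasInteriorBalls d K β) (hE : E.Nonempty)
    (hwp : WeaklyPorousWith μ d K E σ γ) (hσ : 0 < σ) (hγ : γ ∈ Set.Icc 0 1)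
    (hdbl : HoleDoubling d K E C) (hC : 1 ≤ C) {k₁ k₂ k₃ : ℕ} (hk₁ : 2 * K ≤ 2 ^ k₁ * β)
    (hk₂ : K * (1 + 3 * K) ≤ 2 ^ k₂ * β) (hk₃ : 2 * K ≤ 2 ^ k₃) {x₀ : X} {r₀ ε : ℝ}
    (hε : 0 < ε) (hεh : (2 * C / β + K) * ε < hole d K E x₀ r₀) :
    μ {x ∈ ball d x₀ r₀ | distE d E x < γ / (2 * K * C ^ k₁) * ε} ≤
      ENNReal.ofReal (A ^ (k₂ + k₃) / (σ + A ^ (k₂ + k₃))) *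
        μ {x ∈ ball d x₀ r₀ | distE d E x < (2 * C / β + K) * ε} := by
  set p₁ := γ / (2 * K * C ^ k₁)
  set N := 2 * C / β + K
  set S := {x ∈ ball d x₀ r₀ | distE d E x < p₁ * ε}
  set F := {x ∈ ball d x₀ r₀ | distE d E x < N * ε}
  have hK := hd.pos
  have hmeas : ∀ x r, MeasurableSet (ball d x r) := fun x r => (hopen x r).measurableSet
  have hp₁ : p₁ ≤ 1 := by
    rw [div_le_one (by positivity)]
    nlinarith [hγ.2, hd.1, one_le_pow₀ (n := k₁) hC]
  have hN : 1 ≤ N := by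
    have : 0 < 2 * C / β := by have := hβ.1; positivity
    linarith [hd.1]
  have hSF : S ⊆ F := fun x hx => ⟨hx.1, hx.2.trans_le (by nlinarith)⟩
  have hlocal : ∀ x ∈ S, ∃ r G, (0 < r ∧ r ≤ 2 * K * r₀) ∧ MeasurableSet G ∧
      G ⊆ ball d x r ∧ G ⊆ F \ S ∧
      ENNReal.ofReal σ * μ (ball d x (3 * K * r)) ≤ ENNReal.ofReal A ^ (k₂ + k₃) * μ G := by
    intro x hx
    have hr₀ : 0 < r₀ := hd.pos_of_mem_ball hx.1
    have hεx : ε < hole d K E x (2 * K * r₀) :=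
      calc ε ≤ N * ε := le_mul_of_one_le_left hε.le hN
        _ < hole d K E x₀ r₀ := hεh
        _ ≤ hole d K E x (2 * K * r₀) :=
          hole_mono hK.le (by nlinarith [hd.1])
            (hd.ball_subset_ball_of_mem (hd.mem_ball_comm.1 hx.1) (by linarith))
    obtain ⟨r, G, hr, hGm, hGx, hGann, hGμ⟩ := exists_subset_ball_distE_mem_Ico hd hμ hmeas hβ
      hint hE hwp hγ.1 hdbl hC hk₁ hk₂ hk₃ hx.1 hεx
      (hx.2.trans_le (mul_le_of_le_one_left hε.le hp₁))
    refine ⟨r, G, hr, hGm, hGx, fun u hu => ?_, hGμ⟩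
    obtain ⟨hu₀, hlo, hhi⟩ := hGann hu
    exact ⟨⟨hu₀, hhi⟩, fun hS => hS.2.not_ge hlo⟩
  choose! R G hR hGm hGx hGF hGμ using hlocal
  have hcover := mul_measure_le_of_forall_mul_measure_ball_le hd hμ hmeas (fun x hx => hx.1)
    hR hGm hGx hGF hGμ
  have hSm : MeasurableSet S :=
    (hmeas x₀ r₀).inter (isOpen_setOf_distE_lt hd hopen hE _).measurableSet
  rw [← ENNReal.ofReal_pow hA] at hcover
  refine le_ofReal_div_add_mul hσ (by positivity) ?_ hcover
  rw [measure_add_sdiff hSm.nullMeasurableSet, Set.union_eq_right.2 hSF]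

theorem exists_measure_setOf_distE_lt_le [TopologicalSpace X] [BorelSpace X] (hd : QD d K)
    (hμ : DoublingBalls μ d A) (hA : 1 ≤ A) (hopen : ∀ x r, IsOpen (ball d x r))
    (hβ : β ∈ Set.Ioo 0 1) (hint : HasInteriorBalls d K β) (hwp : WeaklyPorousWith μ d K E σ γ)
    (hσ : 0 < σ) (hγ : γ ∈ Set.Ioo 0 1) (hdbl : HoleDoubling d K E C) :
    ∃ p q : ℝ, p ∈ Set.Ioo 0 1 ∧ q ∈ Set.Ioo 0 1 ∧
      ∀ x₀ r₀, (ball d x₀ r₀ ∩ E).Nonempty → ∀ ε, 0 < ε → ε < hole d K E x₀ r₀ →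
        μ {x ∈ ball d x₀ r₀ | distE d E x < p * ε} ≤
          ENNReal.ofReal q * μ {x ∈ ball d x₀ r₀ | distE d E x < ε} := by
  have hK := hd.pos
  have hγ0 := hγ.1
  have hβ0 := hβ.1
  set C' := max C 1
  obtain ⟨k₁, hk₁⟩ := exists_le_two_pow_mul (2 * K) hβ0
  obtain ⟨k₂, hk₂⟩ := exists_le_two_pow_mul (K * (1 + 3 * K)) hβ0
  obtain ⟨k₃, hk₃⟩ := exists_le_two_pow_mul (2 * K) one_pos
  rw [mul_one] at hk₃
  set N := 2 * C' / β + K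
  set p₁ := γ / (2 * K * C' ^ k₁)
  set D := A ^ (k₂ + k₃)
  have hN : 1 ≤ N := by
    have : 0 < 2 * C' / β := by positivity
    linarith [hd.1]
  have hN0 : 0 < N := by linarith
  have hp : p₁ / N ∈ Set.Ioo 0 1 := by
    refine ⟨by positivity, (div_le_self (by positivity) hN).trans_lt ?_⟩
    rw [div_lt_one (by positivity)]
    nlinarith [hγ.2, hd.1, one_le_pow₀ (n := k₁) (le_max_right C 1)]
  have hD : 0 < D := by positivity
  refine ⟨p₁ / N, D / (σ + D), hp, ⟨by positivity, (div_lt_one (by linarith)).2 (by linarith)⟩,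
    fun x₀ r₀ hx₀E ε hε hεh => ?_⟩
  -- At level `ε / N` the bounds `p₁ * ε` and `N * ε` of `measure_setOf_distE_lt_le` become
  -- `p * ε` and `ε`.
  have := measure_setOf_distE_lt_le hd hμ (by linarith) hopen hβ hint
    (hx₀E.mono Set.inter_subset_right) hwp hσ (Set.Ioo_subset_Icc_self hγ)
    (hdbl.mono (le_max_left C 1)) (le_max_right C 1) hk₁ hk₂ hk₃ (ε := ε / N)
    (by positivity) (by rwa [mul_div_cancel₀ _ hN0.ne'])
  rwa [mul_div_cancel₀ _ hN0.ne', show p₁ * (ε / N) = p₁ / N * ε by ring] at this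

end Decay

theorem apply_pow_div_two_mul_le {f : ℝ → ℝ≥0∞} {p h : ℝ} {q m : ℝ≥0∞}
    (hp : p ∈ Set.Ioo 0 1) (hh : 0 ≤ h) (hf₀ : f 0 = 0) (hfm : ∀ ε, f ε ≤ m)
    (hstep : ∀ ε, 0 < ε → ε < h → f (p * ε) ≤ q * f ε) (k : ℕ) :
    f (p ^ k / 2 * h) ≤ q ^ k * m := by
  rcases hh.eq_or_lt with rfl | hh
  · simp [hf₀]
  induction k with
  | zero => simpa using hfm _
  | succ k ih =>
    have hpk : p ^ k ≤ 1 := pow_le_one₀ hp.1.le hp.2.le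
    calc f (p ^ (k + 1) / 2 * h) = f (p * (p ^ k / 2 * h)) := by ring_nf
      _ ≤ q * f (p ^ k / 2 * h) :=
        hstep _ (by have := hp.1; positivity) (by nlinarith)
      _ ≤ q * (q ^ k * m) := by gcongr
      _ = q ^ (k + 1) * m := by ring

theorem statement15_general {X : Type*} [TopologicalSpace X] [MeasurableSpace X] [BorelSpace X]
    (μ : Measure X) (d δ : X → X → ℝ) (K Kδ A C σ₀ γ₀ β : ℝ)
    (hd : QD d K) (hδ : QD δ Kδ) (hA : DoublingBalls μ d A)
    (hopenδ : ∀ x r, IsOpen (ball δ x r))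
    (hequiv : ∀ x y, δ x y ≤ d x y ∧ d x y ≤ 3 * K ^ 2 * δ x y)
    (hβ : β ∈ Set.Ioo (0:ℝ) 1)
    (hint : ∀ x r t y, 0 < r → 0 < t → t ≤ 2 * Kδ * r → y ∈ ball δ x r →
      ∃ z, ball δ z (β * t) ⊆ ball δ y t ∩ ball δ x r)
    (E : Set X)
    (hσ : σ₀ ∈ Set.Ioo (0:ℝ) 1) (hγ : γ₀ ∈ Set.Ioo (0:ℝ) 1)
    (hwp : WeaklyPorousWith μ δ Kδ E σ₀ γ₀)
    (hdbl : HoleDoubling δ Kδ E C) :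
    ∃ p q : ℝ, p ∈ Set.Ioo (0:ℝ) 1 ∧ q ∈ Set.Ioo (0:ℝ) 1 ∧
      ∀ x₀ : X, ∀ r₀ : ℝ, 0 < r₀ → (ball δ x₀ r₀ ∩ E).Nonempty →
        ((∀ ε : ℝ, 0 < ε → ε < hole δ Kδ E x₀ r₀ →
          μ {x ∈ ball δ x₀ r₀ | distE δ E x < p * ε} ≤
            ENNReal.ofReal q * μ {x ∈ ball δ x₀ r₀ | distE δ E x < ε}) ∧
        ∀ k : ℕ,
          μ {x ∈ ball δ x₀ r₀ | distE δ E x < p ^ k / 2 * hole δ Kδ E x₀ r₀} ≤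
            ENNReal.ofReal q ^ k * μ (ball δ x₀ r₀)) := by
  obtain ⟨A', hA', hμ⟩ := hA.of_le_of_le_mul (fun x y => (hequiv x y).1)
    (by nlinarith [hd.1]) (fun x y => (hequiv x y).2)
  obtain ⟨p, q, hp, hq, hstep⟩ :=
    exists_measure_setOf_distE_lt_le hδ hμ hA' hopenδ hβ hint hwp hσ.1 hγ hdbl
  refine ⟨p, q, hp, hq, fun x₀ r₀ _ hx₀E => ⟨hstep x₀ r₀ hx₀E, fun k => ?_⟩⟩
  refine apply_pow_div_two_mul_le (f := fun ε => μ {x ∈ ball δ x₀ r₀ | distE δ E x < ε}) hp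
    (hole_nonneg δ Kδ E x₀ r₀) ?_ (fun ε => measure_mono fun x hx => hx.1)
    (hstep x₀ r₀ hx₀E) k
  simp [(distE_nonneg hδ E _).not_gt]

/-- Decay of neighborhood measures: for `E` `(σ₀,γ₀)`-weakly porous w.r.t. the
Macías–Segovia quasi-distance `δ` with `ρ_{δ,E}` doubling, there are `p,q ∈ (0,1)`,
independent of the ball and of `ε`, with `μ(F(pε)) ≤ q μ(F(ε))` for every ball
`B⁰ = B_δ(x₀,r₀)` meeting `E` and every `0 < ε < ρ_{δ,E}(B⁰)`, where
`F(ε) = {x ∈ B⁰ : δ(x,E) < ε}`; consequently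
`μ(F((p^k/2) ρ_{δ,E}(B⁰))) ≤ q^k μ(B⁰)` for every `k ≥ 0`. -/
theorem statement15 {X : Type*} [TopologicalSpace X] [MeasurableSpace X] [BorelSpace X]
    (μ : Measure X) (d δ : X → X → ℝ) (K Kδ A C σ₀ γ₀ β : ℝ)
    (hd : QD d K) (hδ : QD δ Kδ) (hb : BallsBasis d) (hA : DoublingBalls μ d A)
    (hopenδ : ∀ x r, IsOpen (ball δ x r))
    (hequiv : ∀ x y, δ x y ≤ d x y ∧ d x y ≤ 3 * K ^ 2 * δ x y)
    (hβ : β ∈ Set.Ioo (0:ℝ) 1)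
    (hint : ∀ x r t y, 0 < r → 0 < t → t ≤ 2 * Kδ * r → y ∈ ball δ x r →
      ∃ z, ball δ z (β * t) ⊆ ball δ y t ∩ ball δ x r)
    (E : Set X) (hE : E.Nonempty)
    (hσ : σ₀ ∈ Set.Ioo (0:ℝ) 1) (hγ : γ₀ ∈ Set.Ioo (0:ℝ) 1)
    (hwp : WeaklyPorousWith μ δ Kδ E σ₀ γ₀)
    (hC : 0 < C) (hdbl : HoleDoubling δ Kδ E C) :
    ∃ p q : ℝ, p ∈ Set.Ioo (0:ℝ) 1 ∧ q ∈ Set.Ioo (0:ℝ) 1 ∧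
      ∀ x₀ : X, ∀ r₀ : ℝ, 0 < r₀ → (ball δ x₀ r₀ ∩ E).Nonempty →
        ((∀ ε : ℝ, 0 < ε → ε < hole δ Kδ E x₀ r₀ →
          μ {x ∈ ball δ x₀ r₀ | distE δ E x < p * ε} ≤
            ENNReal.ofReal q * μ {x ∈ ball δ x₀ r₀ | distE δ E x < ε}) ∧
        ∀ k : ℕ,
          μ {x ∈ ball δ x₀ r₀ | distE δ E x < p ^ k / 2 * hole δ Kδ E x₀ r₀} ≤
            ENNReal.ofReal q ^ k * μ (ball δ x₀ r₀)) :=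
  statement15_general μ d δ K Kδ A C σ₀ γ₀ β hd hδ hA hopenδ hequiv hβ hint E hσ hγ hwp hdbl

end WPA1
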